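/- Let A, B, C, D ∈ ℝ with ε := √(A² + B² + C² + D²) ≤ 1/4, let V_S be the associated Suris potential and I the Suris first integral, and let W : ℝ → ℝ be differentiable with bounded derivative. Let (x'_k)_{k ∈ ℤ} be any sequence satisfying x'_{k+1} − 2x'_k + x'_{k−1} = V_S'(x'_k) + W'(x'_k) for all k. Then for every k: |I(x'_{k+1}, x'_{k+1} − x'_k) − I(x'_k, x'_k − x'_{k−1})| ≤ 2π·(1 + 4ε)·|W'(x'_k)|. -/

import Mathlib

open Real

/-- `E(x) = A sin(2πx) + B cos(2πx) + C sin(4πx) + D cos(4πx)`. -/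
noncomputable def Efun (A B C D x : ℝ) : ℝ :=
  A * Real.sin (2 * π * x) + B * Real.cos (2 * π * x) +
    C * Real.sin (4 * π * x) + D * Real.cos (4 * π * x)

/-- `F(x) = −A cos(2πx) + B sin(2πx) − C cos(4πx) + D sin(4πx)`. -/
noncomputable def Ffun (A B C D x : ℝ) : ℝ :=
  -A * Real.cos (2 * π * x) + B * Real.sin (2 * π * x) -
    C * Real.cos (4 * π * x) + D * Real.sin (4 * π * x)

/-- The derivative of the Suris potential:
`V_S'(x) = (1/π) · arctan (E(x) / (1 + F(x)))`. -/
noncomputable def surisSlope (A B C D x : ℝ) : ℝ :=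
  (1 / π) * Real.arctan (Efun A B C D x / (1 + Ffun A B C D x))

/-- The Suris first integral `I(x,y)`. -/
noncomputable def surisI (A B C D x y : ℝ) : ℝ :=
  -Real.cos (2 * π * y)
    + A * (Real.cos (2 * π * x) + Real.cos (2 * π * (x - y)))
    - B * (Real.sin (2 * π * x) + Real.sin (2 * π * (x - y)))
    + C * Real.cos (2 * π * (2 * x - y))
    - D * Real.sin (2 * π * (2 * x - y))

/-- Cauchy–Schwarz for four terms. -/
lemma sum4_abs_le_two_sqrt (A B C D : ℝ) :
    |A| + |B| + |C| + |D| ≤ 2 * Real.sqrt (A ^ 2 + B ^ 2 + C ^ 2 + D ^ 2) := by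
  have h0 : (0:ℝ) ≤ |A| + |B| + |C| + |D| := by positivity
  have hs : (0:ℝ) ≤ 2 * Real.sqrt (A ^ 2 + B ^ 2 + C ^ 2 + D ^ 2) := by positivity
  have h1 : (|A| + |B| + |C| + |D|) ^ 2
      ≤ (2 * Real.sqrt (A ^ 2 + B ^ 2 + C ^ 2 + D ^ 2)) ^ 2 := by
    rw [mul_pow, Real.sq_sqrt (by positivity)]
    nlinarith [sq_abs A, sq_abs B, sq_abs C, sq_abs D, sq_nonneg (|A| - |B|),
      sq_nonneg (|A| - |C|), sq_nonneg (|A| - |D|), sq_nonneg (|B| - |C|),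
      sq_nonneg (|B| - |D|), sq_nonneg (|C| - |D|)]
  nlinarith

/-- The absolute value of `Ffun` is bounded by `|A|+|B|+|C|+|D|`. -/
lemma abs_Ffun_le (A B C D x : ℝ) : |Ffun A B C D x| ≤ |A| + |B| + |C| + |D| := by
  have b1 : |(-A) * Real.cos (2 * π * x)| ≤ |A| := by
    rw [abs_mul, abs_neg]
    exact mul_le_of_le_one_right (abs_nonneg _) (Real.abs_cos_le_one _)
  have b2 : |B * Real.sin (2 * π * x)| ≤ |B| := by
    rw [abs_mul]
    exact mul_le_of_le_one_right (abs_nonneg _) (Real.abs_sin_le_one _)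
  have b3 : |C * Real.cos (4 * π * x)| ≤ |C| := by
    rw [abs_mul]
    exact mul_le_of_le_one_right (abs_nonneg _) (Real.abs_cos_le_one _)
  have b4 : |D * Real.sin (4 * π * x)| ≤ |D| := by
    rw [abs_mul]
    exact mul_le_of_le_one_right (abs_nonneg _) (Real.abs_sin_le_one _)
  have h1 := abs_le.mp b1; have h2 := abs_le.mp b2
  have h3 := abs_le.mp b3; have h4 := abs_le.mp b4
  rw [Ffun]
  apply abs_le.mpr
  constructor <;> [skip; skip] <;>
    · obtain ⟨l1, r1⟩ := h1; obtain ⟨l2, r2⟩ := h2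
      obtain ⟨l3, r3⟩ := h3; obtain ⟨l4, r4⟩ := h4
      linarith

/-- The Suris identity: `I` is invariant along one exact step of the Suris map. -/
lemma surisI_invariant (A B C D x y : ℝ) (hF : 1 + Ffun A B C D x ≠ 0) :
    surisI A B C D (x + (y + surisSlope A B C D x)) (y + surisSlope A B C D x)
      = surisI A B C D x y := by
  have hπ : (π : ℝ) ≠ 0 := Real.pi_ne_zero
  set θ : ℝ := Real.arctan (Efun A B C D x / (1 + Ffun A B C D x)) with hθdef
  have hcos : Real.cos θ ≠ 0 := (Real.cos_arctan_pos _).ne'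
  have htan : Real.tan θ = Efun A B C D x / (1 + Ffun A B C D x) := Real.tan_arctan _
  rw [Real.tan_eq_sin_div_cos] at htan
  have hkey : Real.sin θ * (1 + Ffun A B C D x) = Real.cos θ * Efun A B C D x := by
    field_simp at htan
    linarith
  have hslope : surisSlope A B C D x = 1 / π * θ := by rw [surisSlope, hθdef]
  rw [hslope]
  have e1 : 2 * π * (y + 1 / π * θ) = 2 * π * y + (θ + θ) := by field_simp; ring
  have e2 : 2 * π * (x + (y + 1 / π * θ)) = 2 * π * x + (2 * π * y + (θ + θ)) := by
    field_simp; ring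
  have e3 : 2 * π * (x + (y + 1 / π * θ) - (y + 1 / π * θ)) = 2 * π * x := by ring
  have e4 : 2 * π * (2 * (x + (y + 1 / π * θ)) - (y + 1 / π * θ))
      = 2 * π * x + 2 * π * x + (2 * π * y + (θ + θ)) := by field_simp; ring
  have e5 : 2 * π * (x - y) = 2 * π * x - 2 * π * y := by ring
  have e6 : 2 * π * (2 * x - y) = 2 * π * x + 2 * π * x - 2 * π * y := by ring
  have e7 : 4 * π * x = 2 * π * x + 2 * π * x := by ring
  simp only [Efun, Ffun, e7] at hkey
  simp only [surisI, e1, e2, e3, e4, e5, e6]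
  simp only [Real.sin_add, Real.cos_add, Real.sin_sub, Real.cos_sub] at hkey ⊢
  set a := Real.sin (2 * π * x)
  set b := Real.cos (2 * π * x)
  set p := Real.sin (2 * π * y)
  set q := Real.cos (2 * π * y)
  linear_combination (2 * (p * Real.cos θ + q * Real.sin θ)) * hkey +
    (-q + D * b ^ 2 * p - 2 * D * a * b * q - D * a ^ 2 * p + C * b ^ 2 * q
      + 2 * C * a * b * p - C * a ^ 2 * q + B * b * p - B * a * q + A * b * q + A * a * p)
      * (Real.sin_sq_add_cos_sq θ)

lemma abs_five (a b c d e : ℝ) : |a - b - c - d - e| ≤ |a| + |b| + |c| + |d| + |e| := by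
  have h1 := le_abs_self a; have h2 := neg_abs_le a
  have h3 := le_abs_self b; have h4 := neg_abs_le b
  have h5 := le_abs_self c; have h6 := neg_abs_le c
  have h7 := le_abs_self d; have h8 := neg_abs_le d
  have h9 := le_abs_self e; have h10 := neg_abs_le e
  apply abs_le.mpr; constructor <;> linarith

lemma hasDerivAt_G (A B C D x : ℝ) (t : ℝ) :
    HasDerivAt (fun t => surisI A B C D (x + t) t)
      (2 * π * Real.sin (2 * π * t)
        - A * (2 * π * Real.sin (2 * π * (x + t)))
        - B * (2 * π * Real.cos (2 * π * (x + t)))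
        - C * (2 * π * Real.sin (2 * π * (2 * x + t)))
        - D * (2 * π * Real.cos (2 * π * (2 * x + t)))) t := by
  have hfun : (fun t => surisI A B C D (x + t) t)
      = (fun t : ℝ => -Real.cos (2 * π * t)
          + A * (Real.cos (2 * π * (x + t)) + Real.cos (2 * π * x))
          - B * (Real.sin (2 * π * (x + t)) + Real.sin (2 * π * x))
          + C * Real.cos (2 * π * (2 * x + t))
          - D * Real.sin (2 * π * (2 * x + t))) := by
    funext u
    have h1 : x + u - u = x := by ring
    have h2 : 2 * (x + u) - u = 2 * x + u := by ring
    simp only [surisI, h1, h2]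
  rw [hfun]
  have hlin1 : HasDerivAt (fun t : ℝ => 2 * π * t) (2 * π) t := by
    simpa using (hasDerivAt_id t).const_mul (2 * π)
  have hlin2 : HasDerivAt (fun t : ℝ => 2 * π * (x + t)) (2 * π) t := by
    have := ((hasDerivAt_id t).const_add x).const_mul (2 * π)
    simpa using this
  have hlin3 : HasDerivAt (fun t : ℝ => 2 * π * (2 * x + t)) (2 * π) t := by
    have := ((hasDerivAt_id t).const_add (2 * x)).const_mul (2 * π)
    simpa using this
  have hc1 : HasDerivAt (fun t : ℝ => Real.cos (2 * π * t))
      (-Real.sin (2 * π * t) * (2 * π)) t := (Real.hasDerivAt_cos _).comp t hlin1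
  have hc2 : HasDerivAt (fun t : ℝ => Real.cos (2 * π * (x + t)))
      (-Real.sin (2 * π * (x + t)) * (2 * π)) t := (Real.hasDerivAt_cos _).comp t hlin2
  have hs2 : HasDerivAt (fun t : ℝ => Real.sin (2 * π * (x + t)))
      (Real.cos (2 * π * (x + t)) * (2 * π)) t := (Real.hasDerivAt_sin _).comp t hlin2
  have hc3 : HasDerivAt (fun t : ℝ => Real.cos (2 * π * (2 * x + t)))
      (-Real.sin (2 * π * (2 * x + t)) * (2 * π)) t := (Real.hasDerivAt_cos _).comp t hlin3
  have hs3 : HasDerivAt (fun t : ℝ => Real.sin (2 * π * (2 * x + t)))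
      (Real.cos (2 * π * (2 * x + t)) * (2 * π)) t := (Real.hasDerivAt_sin _).comp t hlin3
  have := ((((hc1.neg.add ((hc2.add_const (Real.cos (2 * π * x))).const_mul A)).sub
      ((hs2.add_const (Real.sin (2 * π * x))).const_mul B)).add
      (hc3.const_mul C)).sub (hs3.const_mul D))
  refine this.congr_deriv ?_
  ring

/-- Mean-value Lipschitz estimate for `t ↦ I(x+t, t)`. -/
lemma surisI_lip (A B C D x t₁ t₂ : ℝ) :
    |surisI A B C D (x + t₁) t₁ - surisI A B C D (x + t₂) t₂|
      ≤ 2 * π * (1 + (|A| + |B| + |C| + |D|)) * |t₁ - t₂| := by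
  have hbound : ∀ u : ℝ,
      ‖deriv (fun t => surisI A B C D (x + t) t) u‖
        ≤ 2 * π * (1 + (|A| + |B| + |C| + |D|)) := by
    intro u
    rw [Real.norm_eq_abs, (hasDerivAt_G A B C D x u).deriv]
    refine (abs_five _ _ _ _ _).trans ?_
    have hπ := Real.pi_pos
    have b1 : |2 * π * Real.sin (2 * π * u)| ≤ 2 * π := by
      rw [abs_mul]
      calc |2 * π| * |Real.sin (2 * π * u)| ≤ |2 * π| * 1 :=
        mul_le_mul_of_nonneg_left (Real.abs_sin_le_one _) (abs_nonneg _)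
      _ = 2 * π := by rw [mul_one, abs_of_pos (by positivity)]
    have key : ∀ (E : ℝ) (v : ℝ), |v| ≤ 1 → |E * (2 * π * v)| ≤ |E| * (2 * π) := by
      intro E v hv
      rw [abs_mul, abs_mul]
      have : |2 * π| * |v| ≤ 2 * π := by
        rw [abs_of_pos (by positivity : (0:ℝ) < 2 * π)]
        nlinarith [abs_nonneg v]
      nlinarith [abs_nonneg E]
    have b2 := key A _ (Real.abs_sin_le_one (2 * π * (x + u)))
    have b3 := key B _ (Real.abs_cos_le_one (2 * π * (x + u)))
    have b4 := key C _ (Real.abs_sin_le_one (2 * π * (2 * x + u)))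
    have b5 := key D _ (Real.abs_cos_le_one (2 * π * (2 * x + u)))
    nlinarith [abs_nonneg A, abs_nonneg B, abs_nonneg C, abs_nonneg D]
  have := Convex.norm_image_sub_le_of_norm_deriv_le
    (f := fun t => surisI A B C D (x + t) t) (s := Set.univ)
    (fun u _ => (hasDerivAt_G A B C D x u).differentiableAt)
    (fun u _ => hbound u) convex_univ (Set.mem_univ t₂) (Set.mem_univ t₁)
  simpa [Real.norm_eq_abs] using this

/-- Step of Lemma 5.7: along an orbit of the perturbed map `F_{V_S + W}`, the Suris
first integral changes by at most `2π(1 + 4ε)|W'(x'_k)|` at each step. -/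
theorem surisI_deviation_along_perturbed_orbit
    (A B C D : ℝ)
    (hε : Real.sqrt (A ^ 2 + B ^ 2 + C ^ 2 + D ^ 2) ≤ 1 / 4)
    (W : ℝ → ℝ) (hW : Differentiable ℝ W)
    (M : ℝ) (hM : ∀ x, |deriv W x| ≤ M)
    (x' : ℤ → ℝ)
    (hFK' : ∀ k : ℤ, x' (k + 1) - 2 * x' k + x' (k - 1)
      = surisSlope A B C D (x' k) + deriv W (x' k)) :
    ∀ k : ℤ,
      |surisI A B C D (x' (k + 1)) (x' (k + 1) - x' k)
        - surisI A B C D (x' k) (x' k - x' (k - 1))|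
      ≤ 2 * π * (1 + 4 * Real.sqrt (A ^ 2 + B ^ 2 + C ^ 2 + D ^ 2))
          * |deriv W (x' k)| := by
  intro k
  set ε := Real.sqrt (A ^ 2 + B ^ 2 + C ^ 2 + D ^ 2) with hεdef
  have hεnn : 0 ≤ ε := Real.sqrt_nonneg _
  have hsum : |A| + |B| + |C| + |D| ≤ 2 * ε := sum4_abs_le_two_sqrt A B C D
  set x := x' k with hx
  set w := deriv W (x' k) with hw
  set y := x' k - x' (k - 1) with hy
  set z := y + surisSlope A B C D x with hz
  have hF : 1 + Ffun A B C D x ≠ 0 := by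
    have := abs_le.mp (abs_Ffun_le A B C D x)
    have : -(2 * ε) ≤ Ffun A B C D x := by linarith [this.1]
    have h2 : (0:ℝ) < 1 + Ffun A B C D x := by linarith
    exact h2.ne'
  have hFKk := hFK' k
  have hx1 : x' (k + 1) = x + (z + w) := by
    rw [hz, hy, hx]; linarith
  have hx2 : x' (k + 1) - x' k = z + w := by rw [hx1, hx]; ring
  rw [hx2, hx1]
  have hinv : surisI A B C D (x + z) z = surisI A B C D x y :=
    surisI_invariant A B C D x y hF
  rw [← hinv]
  have hlip := surisI_lip A B C D x (z + w) z
  have habs : |z + w - z| = |w| := by ring_nf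
  rw [habs] at hlip
  refine hlip.trans ?_
  have hπ := Real.pi_pos
  have hwnn := abs_nonneg w
  have h1 : 1 + (|A| + |B| + |C| + |D|) ≤ 1 + 4 * ε := by linarith
  exact mul_le_mul_of_nonneg_right
    (mul_le_mul_of_nonneg_left h1 (by positivity)) hwnn
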